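/- Suppose F: ℝ^d → ℝ satisfies sup_{|e|=1} ∫_1^∞ |F(u·e)|/u du < ∞ and |F(x)| ≤ F(0) for all x. Then for all x ∈ ℝ^d \ {0} and all a ≥ 1: ∫_a^∞ |F(u·x)|/u du ≤ F(0) · max(ln(1/(a|x|)), 0) + C, where C = sup_{|e|=1} ∫_1^∞ |F(u·e)|/u du. -/

import Mathlib

open MeasureTheory Set

/-!
The measure `du/u` is invariant under dilations, so after writing `x = ‖x‖ e` with `‖e‖ = 1`
the integral becomes `∫_{a‖x‖}^∞ |F(v e)|/v dv`. Beyond `1` this is at most `C`, and on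
`(a‖x‖, 1]` the bound `|F| ≤ F(0)` contributes at most `F(0) ∫_{a‖x‖}^1 dv/v = F(0) ln(1/(a‖x‖))`.
-/

lemma setIntegral_Ioi_comp_mul_div_self (g : ℝ → ℝ) (a : ℝ) {c : ℝ} (hc : 0 < c) :
    ∫ u in Ioi a, g (u * c) / u = ∫ v in Ioi (a * c), g v / v := by
  have hscale : ∀ u, g (u * c) / u = c * (g (u * c) / (u * c)) := fun u => by
    rw [mul_div_assoc', mul_comm c, mul_div_mul_right _ _ hc.ne']
  simp_rw [hscale]
  rw [integral_const_mul, integral_comp_mul_right_Ioi (fun v => g v / v) a hc, smul_eq_mul,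
    mul_inv_cancel_left₀ hc.ne']

section DivSelf

variable {h : ℝ → ℝ} {M : ℝ}

lemma integrableOn_Ioc_div_self (hmeas : Measurable h) (h0 : ∀ v, 0 ≤ h v)
    (hM : ∀ v, h v ≤ M) {b : ℝ} (hb : 0 < b) (c : ℝ) :
    IntegrableOn (fun v => h v / v) (Ioc b c) := by
  refine Integrable.mono' (integrableOn_const (C := M / b) measure_Ioc_lt_top.ne)
    (hmeas.div measurable_id).aestronglyMeasurable ?_
  filter_upwards [ae_restrict_mem measurableSet_Ioc] with v hv
  have hv0 : 0 < v := hb.trans hv.1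
  rw [Real.norm_eq_abs, abs_of_nonneg (div_nonneg (h0 v) hv0.le)]
  exact div_le_div₀ ((h0 v).trans (hM v)) (hM v) hb hv.1.le

lemma integrableOn_Ioi_div_self_iff (hmeas : Measurable h) (h0 : ∀ v, 0 ≤ h v)
    (hM : ∀ v, h v ≤ M) {b c : ℝ} (hb : 0 < b) (hc : 0 < c) :
    IntegrableOn (fun v => h v / v) (Ioi b) ↔ IntegrableOn (fun v => h v / v) (Ioi c) := by
  have key : ∀ {s t : ℝ}, 0 < s → s ≤ t →
      (IntegrableOn (fun v => h v / v) (Ioi s) ↔ IntegrableOn (fun v => h v / v) (Ioi t)) :=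
    fun {s t} hs hst => ⟨fun hi => hi.mono_set (Ioi_subset_Ioi hst), fun hi => by
      simpa only [Ioc_union_Ioi_eq_Ioi hst] using
        (integrableOn_Ioc_div_self hmeas h0 hM hs t).union hi⟩
  rcases le_total b c with hbc | hcb
  · exact key hb hbc
  · exact (key hc hcb).symm

lemma setIntegral_Ioc_div_self_le (h0 : ∀ v, 0 ≤ h v) (hM : ∀ v, h v ≤ M) {b c : ℝ}
    (hb : 0 < b) (hbc : b ≤ c) :
    ∫ v in Ioc b c, h v / v ≤ M * Real.log (c / b) := by
  have hinv : IntegrableOn (fun v : ℝ => v⁻¹) (Ioc b c) :=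
    (continuousOn_inv₀.mono fun v hv => (hb.trans_le hv.1).ne').integrableOn_Icc.mono_set
      Ioc_subset_Icc_self
  calc ∫ v in Ioc b c, h v / v
      ≤ ∫ v in Ioc b c, M * v⁻¹ :=
        integral_mono_of_nonneg
          (ae_restrict_of_forall_mem measurableSet_Ioc fun v hv =>
            div_nonneg (h0 v) (hb.trans hv.1).le)
          (hinv.const_mul M)
          (ae_restrict_of_forall_mem measurableSet_Ioc fun v hv => by
            change h v / v ≤ M * v⁻¹
            rw [← div_eq_mul_inv]
            exact div_le_div_of_nonneg_right (hM v) (hb.trans hv.1).le)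
    _ = M * Real.log (c / b) := by
        rw [integral_const_mul, ← intervalIntegral.integral_of_le hbc,
          integral_inv_of_pos hb (hb.trans_le hbc)]

theorem setIntegral_Ioi_div_self_le (hmeas : Measurable h) (h0 : ∀ v, 0 ≤ h v)
    (hM : ∀ v, h v ≤ M) {b : ℝ} (hb : 0 < b) :
    ∫ v in Ioi b, h v / v ≤ M * max (Real.log (1 / b)) 0 + ∫ v in Ioi 1, h v / v := by
  have hlog : 0 ≤ M * max (Real.log (1 / b)) 0 :=
    mul_nonneg ((h0 0).trans (hM 0)) (le_max_right _ _)
  by_cases hint : IntegrableOn (fun v => h v / v) (Ioi 1)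
  swap
  -- Off integrability both Bochner integrals take the junk value `0`.
  · rw [integral_undef hint,
      integral_undef ((integrableOn_Ioi_div_self_iff hmeas h0 hM hb one_pos).not.mpr hint)]
    simpa using hlog
  rcases le_or_gt 1 b with hb1 | hb1
  · calc ∫ v in Ioi b, h v / v
        ≤ ∫ v in Ioi 1, h v / v :=
          setIntegral_mono_set hint
            (ae_restrict_of_forall_mem measurableSet_Ioi fun v hv =>
              div_nonneg (h0 v) (one_pos.trans hv).le)
            (Ioi_subset_Ioi hb1).eventuallyLE
      _ ≤ _ := le_add_of_nonneg_left hlog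
  · rw [← Ioc_union_Ioi_eq_Ioi hb1.le, setIntegral_union (Ioc_disjoint_Ioi le_rfl)
      measurableSet_Ioi (integrableOn_Ioc_div_self hmeas h0 hM hb 1) hint]
    gcongr
    exact (setIntegral_Ioc_div_self_le h0 hM hb hb1.le).trans
      (mul_le_mul_of_nonneg_left (le_max_left _ _) ((h0 0).trans (hM 0)))

end DivSelf

/-- If `sup_{|e|=1} ∫_1^∞ |F(u·e)|/u du ≤ C` and `|F(x)| ≤ F(0)`, then for every `x ≠ 0`
and `a ≥ 1`: `∫_a^∞ |F(u·x)|/u du ≤ F(0)·ln_+(1/(a|x|)) + C`. -/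
theorem stmt_3 (d : ℕ) (F : EuclideanSpace ℝ (Fin d) → ℝ) (C : ℝ)
    (hmeas : Measurable F)
    (hC : ∀ e : EuclideanSpace ℝ (Fin d), ‖e‖ = 1 →
      (∫ u in Set.Ioi (1 : ℝ), |F (u • e)| / u) ≤ C)
    (hbound : ∀ x, |F x| ≤ F 0) :
    ∀ x : EuclideanSpace ℝ (Fin d), x ≠ 0 → ∀ a : ℝ, 1 ≤ a →
      (∫ u in Set.Ioi a, |F (u • x)| / u) ≤
        F 0 * max (Real.log (1 / (a * ‖x‖))) 0 + C := by
  intro x hx a ha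
  have hxn : 0 < ‖x‖ := norm_pos_iff.mpr hx
  set e := ‖x‖⁻¹ • x
  have he : ‖e‖ = 1 := by rw [norm_smul, norm_inv, norm_norm, inv_mul_cancel₀ hxn.ne']
  have hpolar : ∀ u : ℝ, u • x = (u * ‖x‖) • e := fun u => by
    rw [smul_smul, mul_assoc, mul_inv_cancel₀ hxn.ne', mul_one]
  simp_rw [hpolar]
  rw [setIntegral_Ioi_comp_mul_div_self (fun v => |F (v • e)|) a hxn]
  calc _ ≤ F 0 * max (Real.log (1 / (a * ‖x‖))) 0 + ∫ v in Ioi 1, |F (v • e)| / v :=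
        setIntegral_Ioi_div_self_le
          (hmeas.comp (measurable_id.smul_const e)).abs
          (fun _ => abs_nonneg _) (fun _ => hbound _) (mul_pos (one_pos.trans_le ha) hxn)
    _ ≤ _ := by gcongr; exact hC e he
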